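/- Let A be an Artin algebra and let a dominant Auslander-Gorenstein algebra be an Iwanaga-Gorenstein algebra such that idim P ≤ domdim P for every indecomposable projective module P. If A is dominant Auslander-Gorenstein and P is an indecomposable projective non-injective A-module, then domdim P = idim P. -/

import Mathlib

open CategoryTheory CategoryTheory.Limits

namespace Paper

variable (R : Type) [Ring R]

/-! ## Basic notions -/

/-- A submodule is essential if it meets every nonzero submodule nontrivially. -/
def Essential {M : Type} [AddCommGroup M] [Module R M] (S : Submodule R M) : Prop :=
  ∀ N : Submodule R M, N ≠ ⊥ → N ⊓ S ≠ ⊥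

/-- An object of `ModuleCat R` is indecomposable. -/
def Indec (M : ModuleCat.{0} R) : Prop :=
  ¬ IsZero M ∧ ∀ e : M ⟶ M, e ≫ e = e → e = 0 ∨ e = 𝟙 M

/-- The radical of a module. -/
def radM (M : ModuleCat.{0} R) : Submodule R M :=
  (Ideal.jacobson (⊥ : Ideal R)) • (⊤ : Submodule R M)

/-! ## Resolutions and homological dimensions -/

/-- An injective coresolution `0 → M → I⁰ → I¹ → ⋯`. -/
structure InjCores (M : ModuleCat.{0} R) where
  I : ℕ → ModuleCat.{0} R
  ι : M ⟶ I 0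
  d : ∀ n : ℕ, I n ⟶ I (n + 1)
  inj : ∀ n, Injective (I n)
  mono : Function.Injective ι
  exact0 : LinearMap.range ι.hom = LinearMap.ker (d 0).hom
  exact : ∀ n, LinearMap.range (d n).hom = LinearMap.ker (d (n + 1)).hom

/-- Minimality of an injective coresolution: all kernels are essential submodules. -/
def InjCores.Minimal {M : ModuleCat.{0} R} (C : InjCores R M) : Prop :=
  Essential R (LinearMap.range C.ι.hom) ∧ ∀ n, Essential R (LinearMap.ker (C.d n).hom)

/-- A projective resolution `⋯ → P₁ → P₀ → M → 0`. -/
structure ProjRes (M : ModuleCat.{0} R) where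
  P : ℕ → ModuleCat.{0} R
  π : P 0 ⟶ M
  d : ∀ n : ℕ, P (n + 1) ⟶ P n
  proj : ∀ n, Projective (P n)
  epi : Function.Surjective π
  exact0 : LinearMap.range (d 0).hom = LinearMap.ker π.hom
  exact : ∀ n, LinearMap.range (d (n + 1)).hom = LinearMap.ker (d n).hom

/-- Minimality of a projective resolution: all kernels are superfluous. -/
def ProjRes.Minimal {M : ModuleCat.{0} R} (D : ProjRes R M) : Prop :=
  LinearMap.ker D.π.hom ≤ radM R (D.P 0) ∧ ∀ n, LinearMap.ker (D.d n).hom ≤ radM R (D.P (n + 1))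

/-- Injective dimension as an element of `ℕ∞`. -/
noncomputable def idim (M : ModuleCat.{0} R) : ℕ∞ :=
  sInf {n : ℕ∞ | ∃ C : InjCores R M, ∀ m : ℕ, n < (m : ℕ∞) → IsZero (C.I m)}

/-- Projective dimension as an element of `ℕ∞`. -/
noncomputable def pdim (M : ModuleCat.{0} R) : ℕ∞ :=
  sInf {n : ℕ∞ | ∃ D : ProjRes R M, ∀ m : ℕ, n < (m : ℕ∞) → IsZero (D.P m)}

/-- Dominant dimension: the supremum of all `n` such that there is an injective
coresolution whose first `n` terms are projective(-injective). -/
noncomputable def domdim (M : ModuleCat.{0} R) : ℕ∞ :=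
  sSup {n : ℕ∞ | ∃ k : ℕ, n = (k : ℕ∞) ∧
    ∃ C : InjCores R M, ∀ m : ℕ, m < k → Projective (C.I m)}

/-- The regular module. -/
noncomputable def reg : ModuleCat.{0} R := ModuleCat.of R R

noncomputable def domdimAlg : ℕ∞ := domdim R (reg R)

noncomputable def idimAlg : ℕ∞ := idim R (reg R)

noncomputable def gldim : ℕ∞ := ⨆ M : ModuleCat.{0} R, pdim R M

/-- Iwanaga-Gorenstein algebras. -/
def IwanagaGorenstein : Prop := idimAlg R ≠ ⊤ ∧ idimAlg Rᵐᵒᵖ ≠ ⊤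

/-- Dominant Auslander-Gorenstein algebras. -/
def DomAG : Prop := IwanagaGorenstein R ∧
  ∀ P : ModuleCat.{0} R, Projective P → Indec R P → idim R P ≤ domdim R P

/-- Dominant Auslander-regular algebras. -/
def DomAR : Prop := DomAG R ∧ gldim R ≠ ⊤

/-- Self-injective algebras. -/
def SelfInjective : Prop := Injective (reg R)

/-! ## Ext groups -/

/-- Vanishing of the `n`-th Ext group. -/
noncomputable def extZero (n : ℕ) (X Y : ModuleCat.{0} R) : Prop :=
  letI := HasDerivedCategory.standard (ModuleCat.{0} R)
  letI : HasExt.{1} (ModuleCat.{0} R) := hasExt_of_hasDerivedCategory _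
  Subsingleton (Abelian.Ext.{1} X Y n)

/-! ## add, generators, cogenerators -/

/-- `N ∈ add M`. -/
def InAdd (M N : ModuleCat.{0} R) : Prop :=
  ∃ (k : ℕ) (s : N →ₗ[R] (Fin k → M)) (r : (Fin k → M) →ₗ[R] N), r ∘ₗ s = LinearMap.id

/-- `M` is a finitely generated generator-cogenerator of `mod R`. -/
def GenCogen (M : ModuleCat.{0} R) : Prop :=
  Module.Finite R M ∧
    (∀ P : ModuleCat.{0} R, Projective P → Indec R P → InAdd R M P) ∧
    (∀ I : ModuleCat.{0} R, Injective I → Indec R I → InAdd R M I)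

/-! ## Auslander-Reiten translates -/

/-- `0 → X → E → Z → 0` is an almost split (Auslander-Reiten) sequence. -/
def IsARSeq (X E Z : ModuleCat.{0} R) : Prop :=
  Indec R X ∧ Indec R Z ∧
  ∃ (f : X ⟶ E) (g : E ⟶ Z),
    Function.Injective f ∧ Function.Surjective g ∧
    LinearMap.range f.hom = LinearMap.ker g.hom ∧
    (¬ ∃ s : Z ⟶ E, s ≫ g = 𝟙 Z) ∧
    (∀ (W : ModuleCat.{0} R) (h : W ⟶ Z), (¬ ∃ s : Z ⟶ W, s ≫ h = 𝟙 Z) →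
      ∃ l : W ⟶ E, l ≫ g = h) ∧
    (∀ (W : ModuleCat.{0} R) (h : X ⟶ W), (¬ ∃ s : W ⟶ X, h ≫ s = 𝟙 X) →
      ∃ l : E ⟶ W, f ≫ l = h)

/-- `Y ≅ τ⁻ X`. -/
def IsTauMinus (X Y : ModuleCat.{0} R) : Prop :=
  (Injective X ∧ IsZero Y) ∨ ∃ E, IsARSeq R X E Y

/-- `Y ≅ τ X`. -/
def IsTauPlus (X Y : ModuleCat.{0} R) : Prop :=
  (Projective X ∧ IsZero Y) ∨ ∃ E, IsARSeq R Y E X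

/-- `Y` is a `k`-th cosyzygy `Ω^{-k} X`. -/
def IsCosyz (k : ℕ) (X Y : ModuleCat.{0} R) : Prop :=
  (k = 0 ∧ Nonempty (X ≅ Y)) ∨
  (1 ≤ k ∧ ∃ C : InjCores R X, C.Minimal R ∧
    Nonempty (Y ≅ ModuleCat.of R (LinearMap.ker (C.d k).hom)))

/-- `Y` is a `k`-th syzygy `Ω^k X`. -/
def IsSyz (k : ℕ) (X Y : ModuleCat.{0} R) : Prop :=
  (k = 0 ∧ Nonempty (X ≅ Y)) ∨
  (∃ D : ProjRes R X, D.Minimal R ∧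
    ((k = 1 ∧ Nonempty (Y ≅ ModuleCat.of R (LinearMap.ker D.π.hom))) ∨
     (∃ j : ℕ, k = j + 2 ∧ Nonempty (Y ≅ ModuleCat.of R (LinearMap.ker (D.d j).hom)))))

/-- `Y ≅ τₙ⁻ X = τ⁻ Ω^{-(n-1)} X`. -/
def IsTauNMinus (n : ℕ) (X Y : ModuleCat.{0} R) : Prop :=
  ∃ W, IsCosyz R (n - 1) X W ∧ IsTauMinus R W Y

/-- `Y ≅ τₙ X = τ Ω^{n-1} X`. -/
def IsTauNPlus (n : ℕ) (X Y : ModuleCat.{0} R) : Prop :=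
  ∃ W, IsSyz R (n - 1) X W ∧ IsTauPlus R W Y

/-! ## Mixed (pre)cluster tilting -/

/-- `M` is mixed precluster tilting with respect to the assignment `d` of positive
integers to the indecomposable non-injective summands of `M`:
`Ext^i(M,X) = 0` for `1 ≤ i < d X` and `τ⁻_{d X}(X) ∈ add M`. -/
def MixedPCT (M : ModuleCat.{0} R) (d : ModuleCat.{0} R → ℕ) : Prop :=
  GenCogen R M ∧
  ∀ X : ModuleCat.{0} R, Indec R X → InAdd R M X → ¬ Injective X →
    1 ≤ d X ∧ (∀ i : ℕ, 1 ≤ i → i < d X → extZero R i M X) ∧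
    ∃ Y, IsTauNMinus R (d X) X Y ∧ InAdd R M Y

/-- The dual formulation of mixed precluster tilting, with respect to an assignment `c`
on the indecomposable non-projective summands:
`Ext^i(X,M) = 0` for `1 ≤ i < c X` and `τ_{c X}(X) ∈ add M`. -/
def MixedPCTc (M : ModuleCat.{0} R) (c : ModuleCat.{0} R → ℕ) : Prop :=
  GenCogen R M ∧
  ∀ X : ModuleCat.{0} R, Indec R X → InAdd R M X → ¬ Projective X →
    1 ≤ c X ∧ (∀ i : ℕ, 1 ≤ i → i < c X → extZero R i X M) ∧
    ∃ Y, IsTauNPlus R (c X) X Y ∧ InAdd R M Y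

def IsMixedPCT (M : ModuleCat.{0} R) : Prop := ∃ d, MixedPCT R M d

/-- The subcategory `Z(M)` (as a predicate): `Y` satisfies `Ext^i(Y, X) = 0` for all
indecomposable summands `X` of `M` and all `1 ≤ i ≤ d X - 1`. -/
noncomputable def InZ (M : ModuleCat.{0} R) (d : ModuleCat.{0} R → ℕ) (Y : ModuleCat.{0} R) : Prop :=
  Module.Finite R Y ∧
  ∀ X : ModuleCat.{0} R, Indec R X → InAdd R M X →
    ∀ i : ℕ, 1 ≤ i → i ≤ d X - 1 → extZero R i Y X

/-- Maximal Cohen-Macaulay (Gorenstein projective) modules. -/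
noncomputable def InCM (N : ModuleCat.{0} R) : Prop :=
  Module.Finite R N ∧ ∀ i : ℕ, 1 ≤ i → extZero R i N (reg R)

/-! ## Miscellaneous ring-theoretic notions -/

/-- A primitive idempotent. -/
def IsPrimitiveIdem (e : R) : Prop :=
  IsIdempotentElem e ∧ e ≠ 0 ∧
  ∀ f : R, IsIdempotentElem f → e * f = f → f * e = f → f = 0 ∨ f = e

/-- Ring-indecomposable: no nontrivial central idempotents. -/
def RingIndec : Prop :=
  ∀ e : R, IsIdempotentElem e → e ∈ Set.center R → e = 0 ∨ e = 1

/-- Loewy length of a module, as an element of `ℕ∞`. -/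
noncomputable def LL (M : ModuleCat.{0} R) : ℕ∞ :=
  sInf {n : ℕ∞ | ∃ k : ℕ, n = (k : ℕ∞) ∧
    (Ideal.jacobson (⊥ : Ideal R)) ^ k • (⊤ : Submodule R M) = ⊥}

noncomputable def LLAlg : ℕ∞ := LL R (reg R)

/-- `ℓ`-stiff algebras. -/
noncomputable def Stiff (ℓ : ℕ) : Prop :=
  LLAlg R = (ℓ : ℕ∞) ∧
  ∀ I : ModuleCat.{0} R, Module.Finite R I → Indec R I → Injective I →
    (Projective I ↔ LL R I = (ℓ : ℕ∞))

/-- `I` is an injective envelope of `S`. -/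
def IsInjEnv (S I : ModuleCat.{0} R) : Prop :=
  Injective I ∧ ∃ f : S ⟶ I, Function.Injective f ∧ Essential R (LinearMap.range f.hom)

end Paper

open Paper CategoryTheory

/-!
By the dual Schanuel lemma, the `n`-th cosyzygies of two injective coresolutions of `M` agree up
to injective summands; so if `M` has an injective coresolution of length `n`, the `n`-th cosyzygy
`Ωⁿ` of every injective coresolution is injective. If moreover `I¹, …, Iⁿ` are projective, go
down: an injective `Ωⁱ⁺¹ ⊆ Iⁱ⁺¹` is a summand of `Iⁱ⁺¹`, hence projective, so
`0 → Ωⁱ → Iⁱ → Ωⁱ⁺¹ → 0` splits and `Ωⁱ` is injective. At `i = 0` this makes `M` injective.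
Hence `idim M < domdim M` forces `M` to be injective, and for a non-injective projective `P`
the dominant Auslander-Gorenstein condition gives the reverse inequality.
-/

universe u v

section InjectiveModules

variable {A : Type u} [Ring A] {X Y Q : Type v} [AddCommGroup X] [Module A X]
  [AddCommGroup Y] [Module A Y] [AddCommGroup Q] [Module A Q]

theorem Module.Injective.of_retract [Module.Injective A X] (s : Q →ₗ[A] X) (r : X →ₗ[A] Q)
    (hrs : r ∘ₗ s = LinearMap.id) : Module.Injective A Q where
  out _ _ _ _ _ _ f hf g := by
    obtain ⟨h, hh⟩ := Module.Injective.out f hf (s ∘ₗ g)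
    exact ⟨r ∘ₗ h, fun x => by simp [hh, ← LinearMap.comp_apply r s, hrs]⟩

theorem Module.Injective.of_linearEquiv [Module.Injective A X] (e : X ≃ₗ[A] Q) :
    Module.Injective A Q :=
  .of_retract (e.symm : Q →ₗ[A] X) e (by ext; simp)

instance Module.Injective.prod [Module.Injective A X] [Module.Injective A Y] :
    Module.Injective A (X × Y) where
  out _ _ _ _ _ _ f hf g := by
    obtain ⟨h₁, hh₁⟩ := Module.Injective.out f hf (LinearMap.fst A X Y ∘ₗ g)
    obtain ⟨h₂, hh₂⟩ := Module.Injective.out f hf (LinearMap.snd A X Y ∘ₗ g)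
    exact ⟨h₁.prod h₂, fun x => Prod.ext (hh₁ x) (hh₂ x)⟩

instance Module.Injective.of_subsingleton [Subsingleton Q] : Module.Injective A Q where
  out _ _ _ _ _ _ _ _ _ := ⟨0, fun _ => Subsingleton.elim _ _⟩

theorem Module.Injective.exists_retraction [Module.Injective A X] (f : X →ₗ[A] Y)
    (hf : Function.Injective f) : ∃ r : Y →ₗ[A] X, r ∘ₗ f = LinearMap.id := by
  obtain ⟨r, hr⟩ := Module.Injective.out f hf LinearMap.id
  exact ⟨r, LinearMap.ext hr⟩

theorem Module.Projective.of_injective_linearMap [Module.Injective A X] [Module.Projective A Y]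
    (f : X →ₗ[A] Y) (hf : Function.Injective f) : Module.Projective A X :=
  have ⟨r, hr⟩ := Module.Injective.exists_retraction f hf
  .of_split f r hr

theorem Module.Injective.of_exact_of_projective [Module.Injective A Q] [Module.Projective A Y]
    {g : X →ₗ[A] Q} {p : Q →ₗ[A] Y} (hfp : Function.Exact g p) (hg : Function.Injective g)
    (hp : Function.Surjective p) : Module.Injective A X := by
  obtain ⟨s, hs⟩ := Module.projective_lifting_property p LinearMap.id hp
  have hsplit := hfp.split_tfae'.out 0 1
  obtain ⟨-, r, hr⟩ := hsplit.mp ⟨hg, s, hs⟩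
  exact .of_retract g r hr

end InjectiveModules

section StableEquivalence

variable {A : Type u} [Ring A] {N N' I I' B B' : Type v}
  [AddCommGroup N] [Module A N] [AddCommGroup N'] [Module A N']
  [AddCommGroup I] [Module A I] [AddCommGroup I'] [Module A I']
  [AddCommGroup B] [Module A B] [AddCommGroup B'] [Module A B']

/-- Dual Schanuel lemma. The comparison map `α : I → I'` over `N` gives the short exact sequence
`0 → I → I' × B → B' → 0`, which splits since `I` is injective. -/
theorem Module.Injective.dual_schanuel [Module.Injective A I] [Module.Injective A I']
    {f : N →ₗ[A] I} {p : I →ₗ[A] B} {f' : N →ₗ[A] I'} {p' : I' →ₗ[A] B'}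
    (hfp : Function.Exact f p) (hf : Function.Injective f) (hp : Function.Surjective p)
    (hfp' : Function.Exact f' p') (hf' : Function.Injective f') (hp' : Function.Surjective p') :
    Nonempty ((I' × B) ≃ₗ[A] (I × B')) := by
  obtain ⟨α, hα⟩ := Module.Injective.out f hf f'
  let β : B →ₗ[A] B' := (LinearMap.range f).liftQ (p' ∘ₗ α)
      (by rintro _ ⟨n, rfl⟩; simp [hα, hfp'.apply_apply_eq_zero]) ∘ₗ
    (hfp.linearEquivOfSurjective hp).symm
  have hβ (x : I) : β (p x) = p' (α x) := by simp [β]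
  let χ : I →ₗ[A] I' × B := α.prod p
  let ψ : I' × B →ₗ[A] B' := p'.coprod (-β)
  have hχ : Function.Injective χ := by
    rw [← LinearMap.ker_eq_bot, LinearMap.ker_eq_bot']
    intro x hx
    obtain ⟨n, rfl⟩ := (hfp x).mp (congrArg Prod.snd hx)
    have : f' n = 0 := by simpa [χ, hα] using congrArg Prod.fst hx
    rw [(injective_iff_map_eq_zero f').mp hf' n this, map_zero]
  have hψ : Function.Surjective ψ := fun b' =>
    have ⟨y, hy⟩ := hp' b'
    ⟨(y, 0), by simp [ψ, hy]⟩
  have hχψ : Function.Exact χ ψ := by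
    rintro ⟨y, b⟩
    constructor
    · intro hyb
      obtain ⟨x, rfl⟩ := hp b
      obtain ⟨n, hn⟩ := (hfp' (y - α x)).mp (by
        simpa [ψ, hβ, ← sub_eq_add_neg] using hyb)
      refine ⟨x + f n, Prod.ext ?_ ?_⟩
      · simp [χ, hα, hn]
      · simp [χ, hfp.apply_apply_eq_zero]
    · rintro ⟨x, hx⟩
      simp [← hx, χ, ψ, hβ]
  obtain ⟨r, hr⟩ := Module.Injective.exists_retraction χ hχ
  exact ⟨(hχψ.splitInjectiveEquiv hψ ⟨r, hr⟩).1⟩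

theorem Function.Exact.prodMap_id_fst {f : N →ₗ[A] I} {p : I →ₗ[A] B}
    (hfp : Function.Exact f p) (J : Type v) [AddCommGroup J] [Module A J] :
    Function.Exact (f.prodMap (LinearMap.id : J →ₗ[A] J)) (p ∘ₗ LinearMap.fst A I J) := by
  rintro ⟨x, j⟩
  simp [hfp x]

variable (A) in
/-- `N` and `N'` become isomorphic after adding injective summands, i.e. they are isomorphic in
the stable category modulo injectives. -/
def InjStablyEquiv (N N' : Type v) [AddCommGroup N] [Module A N] [AddCommGroup N'] [Module A N'] :
    Prop :=
  ∃ J J' : ModuleCat.{v} A, Module.Injective A J ∧ Module.Injective A J' ∧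
    Nonempty ((N × J) ≃ₗ[A] (N' × J'))

namespace InjStablyEquiv

theorem of_linearEquiv (e : N ≃ₗ[A] N') : InjStablyEquiv A N N' :=
  ⟨.of A PUnit, .of A PUnit, inferInstance, inferInstance, ⟨e.prodCongr (.refl A _)⟩⟩

theorem injective [Module.Injective A N'] (h : InjStablyEquiv A N N') : Module.Injective A N := by
  obtain ⟨J, J', -, hJ', ⟨e⟩⟩ := h
  have : Module.Injective A (N × J) := .of_linearEquiv e.symm
  exact .of_retract (LinearMap.inl A N J) (LinearMap.fst A N J) (LinearMap.fst_comp_inl A N J)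

theorem cokernel [Module.Injective A I] [Module.Injective A I'] (h : InjStablyEquiv A N N')
    {f : N →ₗ[A] I} {p : I →ₗ[A] B} {f' : N' →ₗ[A] I'} {p' : I' →ₗ[A] B'}
    (hfp : Function.Exact f p) (hf : Function.Injective f) (hp : Function.Surjective p)
    (hfp' : Function.Exact f' p') (hf' : Function.Injective f') (hp' : Function.Surjective p') :
    InjStablyEquiv A B B' := by
  obtain ⟨J, J', hJ, hJ', ⟨e⟩⟩ := h
  obtain ⟨e'⟩ := Module.Injective.dual_schanuel (hfp.prodMap_id_fst J)
    (hf.prodMap Function.injective_id) (hp.comp Prod.fst_surjective)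
    (e.surjective.comp_exact_iff_exact.mpr (hfp'.prodMap_id_fst J'))
    ((hf'.prodMap Function.injective_id).comp e.injective) (hp'.comp Prod.fst_surjective)
  exact ⟨.of A (I' × J'), .of A (I × J), inferInstance, inferInstance,
    ⟨(LinearEquiv.prodComm A _ _).trans (e'.trans (LinearEquiv.prodComm A _ _))⟩⟩

end InjStablyEquiv

end StableEquivalence

namespace Paper.InjCores

variable {A : Type} [Ring A] {M : ModuleCat.{0} A}

instance (C : InjCores A M) (i : ℕ) : Module.Injective A (C.I i) :=
  have := C.inj i
  Module.injective_module_of_injective_object A (C.I i)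

/-- The `i`-th cosyzygy, realised as the kernel of `d i`; for `i = 0` it is the image of `M`. -/
def cosyzygy (C : InjCores A M) (i : ℕ) : Submodule A (C.I i) :=
  LinearMap.ker (C.d i).hom

def toCosyzygy (C : InjCores A M) (i : ℕ) : C.I i →ₗ[A] C.cosyzygy (i + 1) :=
  (C.d i).hom.codRestrict _ fun x => by
    rw [cosyzygy, ← C.exact i]
    exact LinearMap.mem_range_self _ x

theorem toCosyzygy_surjective (C : InjCores A M) (i : ℕ) :
    Function.Surjective (C.toCosyzygy i) := by
  rintro ⟨y, hy⟩
  obtain ⟨x, rfl⟩ := (C.exact i ▸ hy : y ∈ LinearMap.range (C.d i).hom)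
  exact ⟨x, rfl⟩

theorem exact_subtype_toCosyzygy (C : InjCores A M) (i : ℕ) :
    Function.Exact (C.cosyzygy i).subtype (C.toCosyzygy i) := by
  rw [LinearMap.exact_iff, toCosyzygy, LinearMap.ker_codRestrict, Submodule.range_subtype]
  rfl

noncomputable def equivCosyzygyZero (C : InjCores A M) : M ≃ₗ[A] C.cosyzygy 0 :=
  (LinearEquiv.ofInjective C.ι.hom C.mono).trans (LinearEquiv.ofEq _ _ C.exact0)

theorem injStablyEquiv_cosyzygy (C C' : InjCores A M) (i : ℕ) :
    InjStablyEquiv A (C.cosyzygy i) (C'.cosyzygy i) := by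
  induction i with
  | zero => exact .of_linearEquiv (C.equivCosyzygyZero.symm.trans C'.equivCosyzygyZero)
  | succ i ih =>
    exact ih.cokernel (C.exact_subtype_toCosyzygy i) (Submodule.injective_subtype _)
      (C.toCosyzygy_surjective i) (C'.exact_subtype_toCosyzygy i)
      (Submodule.injective_subtype _) (C'.toCosyzygy_surjective i)

theorem injective_cosyzygy_of_isZero (C : InjCores A M) {n : ℕ} (hn : IsZero (C.I (n + 1))) :
    Module.Injective A (C.cosyzygy n) := by
  have : C.cosyzygy n = ⊤ := by
    ext x
    simp [cosyzygy, hn.eq_of_tgt (C.d n) 0]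
  exact .of_linearEquiv (LinearEquiv.ofTop _ this).symm

theorem injective_cosyzygy_of_succ (C : InjCores A M) {i : ℕ} (hproj : Projective (C.I (i + 1)))
    (hinj : Module.Injective A (C.cosyzygy (i + 1))) : Module.Injective A (C.cosyzygy i) := by
  have : Module.Projective A (C.I (i + 1)) := (IsProjective.iff_projective _).mpr hproj
  have : Module.Projective A (C.cosyzygy (i + 1)) :=
    .of_injective_linearMap _ (Submodule.injective_subtype _)
  exact .of_exact_of_projective (C.exact_subtype_toCosyzygy i) (Submodule.injective_subtype _)
    (C.toCosyzygy_surjective i)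

theorem injective_of_projective_of_isZero (C C' : InjCores A M) {n : ℕ}
    (hC : ∀ m < n, Projective (C.I (m + 1))) (hC' : IsZero (C'.I (n + 1))) : Injective M := by
  have hn : Module.Injective A (C.cosyzygy n) :=
    have := C'.injective_cosyzygy_of_isZero hC'
    (C.injStablyEquiv_cosyzygy C' n).injective
  have : Module.Injective A (C.cosyzygy 0) :=
    Nat.decreasingInduction (motive := fun i _ => Module.Injective A (C.cosyzygy i))
      (fun i hi => C.injective_cosyzygy_of_succ (hC i hi)) hn (Nat.zero_le n)
  have : Module.Injective A M := .of_linearEquiv C.equivCosyzygyZero.symm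
  exact Module.injective_object_of_injective_module A M

end Paper.InjCores

theorem Paper.domdim_le_idim_of_not_injective {A : Type} [Ring A] {M : ModuleCat.{0} A}
    (hM : ¬ Injective M) : domdim A M ≤ idim A M := by
  refine sSup_le ?_
  rintro _ ⟨k, rfl, C, hC⟩
  refine le_sInf ?_
  rintro t ⟨C', hC'⟩
  by_contra! hlt
  lift t to ℕ using hlt.ne_top
  have htk : t < k := by exact_mod_cast hlt
  exact hM (C.injective_of_projective_of_isZero C' (n := t) (fun m hm => hC (m + 1) (by omega))
    (hC' _ (by exact_mod_cast t.lt_succ_self)))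

theorem stmt_0_general (A : Type) [Ring A]
    (hA : DomAG A) (P : ModuleCat.{0} A) (hP : Projective P) (hInd : Indec A P)
    (hni : ¬ Injective P) :
    domdim A P = idim A P :=
  le_antisymm (domdim_le_idim_of_not_injective hni) (hA.2 P hP hInd)

/-- For a dominant Auslander-Gorenstein algebra, every indecomposable
projective non-injective module satisfies `domdim P = idim P`. -/
theorem stmt_0 (K A : Type) [Field K] [Ring A] [Algebra K A] [FiniteDimensional K A]
    (hA : DomAG A) (P : ModuleCat.{0} A) (hP : Projective P) (hInd : Indec A P)
    (hni : ¬ Injective P) :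
    domdim A P = idim A P :=
  stmt_0_general A hA P hP hInd hni
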